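/- For all a,c ∈ ℝ with a+c>0 and all τ>0, (1/(2π)) ∫_0^∞ e^{−τ v²/2} · 4v² / ((a² + v²)(c² + v²)) dv = √τ · 𝔠(|a|√(2τ), |c|√(2τ)). -/

import Mathlib

open MeasureTheory Real Filter Topology

noncomputable section

/-- Transition kernel of Brownian motion killed at hitting zero (vanishing off `(0,∞)²`). -/
def gker (t x y : ℝ) : ℝ :=
  if 0 < x ∧ 0 < y then
    (Real.sqrt (2 * Real.pi * t))⁻¹ *
      (Real.exp (-(x - y) ^ 2 / (2 * t)) - Real.exp (-(x + y) ^ 2 / (2 * t)))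
  else 0

/-- Normalizing constant `𝔠(a,c)`. -/
def cAC (a c : ℝ) : ℝ :=
  ∫ p : ℝ × ℝ in Set.Ioi (0 : ℝ) ×ˢ Set.Ioi (0 : ℝ),
    Real.exp (-(c * p.1 + a * p.2) / Real.sqrt 2) * gker 1 p.1 p.2

open Set

section Aux
lemma gauss_cos_real (v : ℝ) :
    ∫ x : ℝ, Real.exp (-x ^ 2 / 2) * Real.cos (v * x) = Real.sqrt (2 * π) * Real.exp (-v ^ 2 / 2) := by
  have hb : (0:ℝ) < (1/2 : ℂ).re := by norm_num
  have h := fourierIntegral_gaussian (b := (1/2 : ℂ)) hb (v : ℂ)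
  have hint : Integrable (fun x : ℝ => Complex.exp (Complex.I * v * x) * Complex.exp (-(1/2) * x ^ 2)) := by
    have h2 := integrable_cexp_quadratic (b := (1/2:ℂ)) hb (Complex.I * v) 0
    refine (integrable_congr (Eventually.of_forall fun x => ?_)).mp h2
    rw [add_zero, add_comm, Complex.exp_add]
  have hL : ∀ x : ℝ, (Complex.exp (Complex.I * v * x) * Complex.exp (-(1/2) * x ^ 2)).re
      = Real.exp (-x ^ 2 / 2) * Real.cos (v * x) := by
    intro x
    rw [← Complex.exp_add]
    have e : Complex.I * v * x + -(1/2) * x ^ 2 = Complex.mk (-x^2/2) (v*x) := by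
      apply Complex.ext <;> simp [← Complex.ofReal_pow] <;> ring
    rw [e, Complex.exp_re]
  calc ∫ x : ℝ, Real.exp (-x ^ 2 / 2) * Real.cos (v * x)
      = ∫ x : ℝ, RCLike.re (Complex.exp (Complex.I * v * x) * Complex.exp (-(1/2) * x ^ 2)) := by
        congr 1; funext x; rw [RCLike.re_to_complex, hL]
    _ = RCLike.re (∫ x : ℝ, Complex.exp (Complex.I * v * x) * Complex.exp (-(1/2) * x ^ 2)) :=
        integral_re hint
    _ = ((π / (1/2:ℂ)) ^ (1 / 2 : ℂ) * Complex.exp (-(v:ℂ) ^ 2 / (4 * (1/2)))).re := by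
        rw [h, RCLike.re_to_complex]
    _ = Real.sqrt (2 * π) * Real.exp (-v ^ 2 / 2) := by
        have h1 : (π / (1/2:ℂ)) = ((2 * π : ℝ) : ℂ) := by push_cast; ring
        have h2 : (-(v:ℂ) ^ 2 / (4 * (1/2))) = ((-v^2/2 : ℝ) : ℂ) := by push_cast; ring
        rw [h1, h2, show ((1:ℂ)/2) = ((1/2:ℝ):ℂ) by norm_num,
          ← Complex.ofReal_cpow (by positivity), ← Complex.ofReal_exp, ← Complex.ofReal_mul,
          Complex.ofReal_re, ← Real.sqrt_eq_rpow]

lemma integrable_gauss_cos (b : ℝ) :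
    IntegrableOn (fun v => Real.exp (-v ^ 2 / 2) * Real.cos (b * v)) (Ioi (0:ℝ)) := by
  refine Integrable.mono' (g := fun v => Real.exp (-v^2/2)) ?_
    (Continuous.aestronglyMeasurable (by fun_prop)) ?_
  · exact (Integrable.integrableOn (by
      simpa [neg_div, mul_comm, mul_one_div, div_eq_mul_inv] using integrable_exp_neg_mul_sq (by norm_num : (0:ℝ) < 1/2)))
  · filter_upwards with x
    rw [norm_mul, Real.norm_eq_abs, Real.norm_eq_abs, abs_of_pos (Real.exp_pos _)]
    nlinarith [abs_cos_le_one (b*x), Real.exp_pos (-x^2/2), abs_nonneg (Real.cos (b*x))]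

lemma gauss_cos_Ioi (b : ℝ) :
    ∫ v in Ioi (0:ℝ), Real.exp (-v ^ 2 / 2) * Real.cos (b * v)
      = Real.sqrt (π / 2) * Real.exp (-b ^ 2 / 2) := by
  have he : ∀ v : ℝ, Real.exp (-|v| ^ 2 / 2) * Real.cos (b * |v|)
      = Real.exp (-v ^ 2 / 2) * Real.cos (b * v) := by
    intro v
    rcases abs_choice v with h | h <;> rw [h] <;> simp [Real.cos_neg, mul_neg, neg_pow]
  have h2 := integral_comp_abs (f := fun v => Real.exp (-v ^ 2 / 2) * Real.cos (b * v))
  simp only [he] at h2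
  rw [gauss_cos_real] at h2
  have h3 : Real.sqrt (2*π) = 2 * Real.sqrt (π/2) := by
    rw [show (2*π) = (π/2) * 2^2 by ring, Real.sqrt_mul' _ (by positivity), Real.sqrt_sq (by norm_num)]
    ring
  rw [h3] at h2
  linarith [h2]

lemma integrable_exp_sin (p v : ℝ) (hp : 0 < p) :
    IntegrableOn (fun x => Real.exp (-(p * x)) * Real.sin (v * x)) (Ioi (0:ℝ)) := by
  refine Integrable.mono' (g := fun x => Real.exp (-(p*x))) ?_
    (Continuous.aestronglyMeasurable (by fun_prop)) ?_
  · simpa [neg_mul, IntegrableOn] using (exp_neg_integrableOn_Ioi 0 hp)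
  · filter_upwards with x
    rw [norm_mul, Real.norm_eq_abs, Real.norm_eq_abs, abs_of_pos (Real.exp_pos _)]
    nlinarith [abs_sin_le_one (v*x), Real.exp_pos (-(p*x)), abs_nonneg (Real.sin (v*x))]

lemma laplace_sin (p v : ℝ) (hp : 0 < p) :
    ∫ x in Ioi (0:ℝ), Real.exp (-(p * x)) * Real.sin (v * x) = v / (p ^ 2 + v ^ 2) := by
  have hd : (0:ℝ) < p ^ 2 + v ^ 2 := by positivity
  set F : ℝ → ℝ := fun x => -Real.exp (-(p*x)) * (p * Real.sin (v*x) + v * Real.cos (v*x)) / (p^2+v^2) with hF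
  have hderiv : ∀ x : ℝ, HasDerivAt F (Real.exp (-(p*x)) * Real.sin (v*x)) x := by
    intro x
    have h1 : HasDerivAt (fun x => Real.exp (-(p*x))) (Real.exp (-(p*x)) * (-p)) x := by
      have := (Real.hasDerivAt_exp (-(p*x))).comp x (((hasDerivAt_id x).const_mul p).neg)
      simpa [Function.comp_def, mul_one] using this
    have hs : HasDerivAt (fun x => Real.sin (v*x)) (Real.cos (v*x) * v) x := by
      have := (Real.hasDerivAt_sin (v*x)).comp x ((hasDerivAt_id x).const_mul v)
      simpa [Function.comp_def, mul_one] using this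
    have hc : HasDerivAt (fun x => Real.cos (v*x)) (-Real.sin (v*x) * v) x := by
      have := (Real.hasDerivAt_cos (v*x)).comp x ((hasDerivAt_id x).const_mul v)
      simpa [Function.comp_def, mul_one] using this
    have h2 := (hs.const_mul p).add (hc.const_mul v)
    have := ((h1.neg.mul h2)).div_const (p^2+v^2)
    refine this.congr_deriv (Eq.symm ?_)
    simp only [Pi.add_apply, Pi.neg_apply]
    rw [eq_div_iff hd.ne']
    ring
  have hlim : Tendsto F atTop (𝓝 0) := by
    have hb : Tendsto (fun x : ℝ => Real.exp (-(p*x))) atTop (𝓝 0) := by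
      have := Real.tendsto_exp_neg_atTop_nhds_zero.comp (Tendsto.const_mul_atTop hp tendsto_id)
      simpa [Function.comp_def] using this
    have h3 : Tendsto (fun x => Real.exp (-(p*x)) * (|p| + |v|) / (p^2+v^2)) atTop
        (𝓝 (0 * (|p|+|v|) / (p^2+v^2))) := (hb.mul_const _).div_const _
    rw [zero_mul, zero_div] at h3
    refine squeeze_zero_norm (fun x => ?_) h3
    rw [hF]
    simp only [norm_div, Real.norm_eq_abs, abs_of_pos hd]
    gcongr
    rw [abs_mul, abs_neg, abs_of_pos (Real.exp_pos _)]
    have : |p * Real.sin (v*x) + v * Real.cos (v*x)| ≤ |p| + |v| := by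
      calc |p * Real.sin (v*x) + v * Real.cos (v*x)|
          ≤ |p * Real.sin (v*x)| + |v * Real.cos (v*x)| := abs_add_le _ _
        _ ≤ |p| * 1 + |v| * 1 := by
            rw [abs_mul, abs_mul]
            gcongr
            exacts [abs_sin_le_one _, abs_cos_le_one _]
        _ = |p| + |v| := by ring
    exact mul_le_mul_of_nonneg_left this (Real.exp_pos _).le
  have key := integral_Ioi_of_hasDerivAt_of_tendsto (f := F)
    (f' := fun x => Real.exp (-(p*x)) * Real.sin (v*x)) (a := 0)
    (hderiv 0).continuousAt.continuousWithinAt (fun x _ => hderiv x)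
    (integrable_exp_sin p v hp) hlim
  rw [key, hF]
  simp
  rw [neg_div, neg_neg]

lemma sin_rep (x y : ℝ) :
    ∫ v in Ioi (0:ℝ), Real.exp (-v ^ 2 / 2) * (Real.sin (v * x) * Real.sin (v * y))
      = Real.sqrt (π / 2) / 2 * (Real.exp (-(x - y) ^ 2 / 2) - Real.exp (-(x + y) ^ 2 / 2)) := by
  have key : ∀ v : ℝ, Real.exp (-v ^ 2 / 2) * (Real.sin (v * x) * Real.sin (v * y))
      = (Real.exp (-v ^ 2 / 2) * Real.cos ((x - y) * v)
        - Real.exp (-v ^ 2 / 2) * Real.cos ((x + y) * v)) / 2 := by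
    intro v
    have := Real.cos_sub_cos ((x - y) * v) ((x + y) * v)
    have e1 : ((x - y) * v + (x + y) * v) / 2 = v * x := by ring
    have e2 : ((x - y) * v - (x + y) * v) / 2 = -(v * y) := by ring
    rw [e1, e2, Real.sin_neg] at this
    rw [← mul_sub, this]
    ring
  simp only [key]
  rw [integral_div, integral_sub (integrable_gauss_cos _) (integrable_gauss_cos _),
    gauss_cos_Ioi, gauss_cos_Ioi]
  ring

lemma gker_one (x y : ℝ) (hx : 0 < x) (hy : 0 < y) :
    gker 1 x y = (2 / π) * ∫ v in Ioi (0:ℝ),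
      Real.exp (-v ^ 2 / 2) * (Real.sin (v * x) * Real.sin (v * y)) := by
  rw [gker, if_pos ⟨hx, hy⟩, sin_rep]
  have hc : Real.sqrt (2 * π * 1) = Real.sqrt (2*π) := by norm_num
  have h1 : (2 / π) * (Real.sqrt (π / 2) / 2) = (Real.sqrt (2 * π))⁻¹ := by
    rw [show (2*π) = (π/2)*2^2 by ring, Real.sqrt_mul' _ (by positivity),
      Real.sqrt_sq (by norm_num : (0:ℝ) ≤ 2)]
    have hs : Real.sqrt (π/2) ^ 2 = π/2 := Real.sq_sqrt (by positivity)
    have hne : (0:ℝ) < Real.sqrt (π/2) := Real.sqrt_pos.mpr (by positivity)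
    field_simp
    nlinarith [hs, Real.sq_sqrt (le_of_lt Real.pi_pos), Real.sq_sqrt (by norm_num : (0:ℝ) ≤ 2), Real.sqrt_pos.mpr Real.pi_pos, Real.sqrt_pos.mpr (by norm_num : (0:ℝ) < 2)]
  rw [hc, ← mul_assoc, h1]
  norm_num

lemma integrable_exp_prod (p q : ℝ) (hp : 0 < p) (hq : 0 < q) :
    Integrable (fun z : ℝ × ℝ => Real.exp (-(p * z.1)) * Real.exp (-(q * z.2)))
      ((volume.restrict (Ioi (0:ℝ))).prod (volume.restrict (Ioi (0:ℝ)))) := by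
  exact Integrable.mul_prod
    (by simpa [neg_mul, IntegrableOn] using exp_neg_integrableOn_Ioi 0 hp)
    (by simpa [neg_mul, IntegrableOn] using exp_neg_integrableOn_Ioi 0 hq)

lemma aux_bound (A B C s t : ℝ) (hA : 0 ≤ A) (hB : 0 ≤ B) (hC : 0 ≤ C)
    (hs : |s| ≤ 1) (ht : |t| ≤ 1) : |C * (A * s * (B * t))| ≤ A * B * C := by
  rw [abs_mul, abs_mul, abs_mul, abs_mul, abs_of_nonneg hC, abs_of_nonneg hA, abs_of_nonneg hB]
  calc C * (A * |s| * (B * |t|)) ≤ C * (A * 1 * (B * 1)) := by gcongr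
    _ = A * B * C := by ring

lemma fubini_main (p q : ℝ) (hp : 0 < p) (hq : 0 < q) :
    ∫ z : ℝ × ℝ in Ioi (0:ℝ) ×ˢ Ioi (0:ℝ), Real.exp (-(p * z.1 + q * z.2)) * gker 1 z.1 z.2
      = (2 / π) * ∫ v in Ioi (0:ℝ),
          Real.exp (-v ^ 2 / 2) * (v / (p ^ 2 + v ^ 2) * (v / (q ^ 2 + v ^ 2))) := by
  set μ : Measure ℝ := volume.restrict (Ioi (0:ℝ)) with hμ
  have hstep1 : ∫ z : ℝ × ℝ in Ioi (0:ℝ) ×ˢ Ioi (0:ℝ),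
        Real.exp (-(p * z.1 + q * z.2)) * gker 1 z.1 z.2
      = (2/π) * ∫ z : ℝ × ℝ, (∫ v in Ioi (0:ℝ),
          Real.exp (-v ^ 2 / 2) *
            (Real.exp (-(p * z.1)) * Real.sin (v * z.1) * (Real.exp (-(q * z.2)) * Real.sin (v * z.2)))) ∂(μ.prod μ) := by
    rw [hμ, Measure.prod_restrict, ← Measure.volume_eq_prod, ← integral_const_mul]
    refine setIntegral_congr_fun (measurableSet_Ioi.prod measurableSet_Ioi) (fun z hz => ?_)
    obtain ⟨hz1, hz2⟩ := hz
    rw [gker_one z.1 z.2 hz1 hz2, ← integral_const_mul, ← integral_const_mul]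
    rw [show Real.exp (-(p * z.1 + q * z.2)) = Real.exp (-(p*z.1)) * Real.exp (-(q*z.2)) by
      rw [← Real.exp_add]; ring_nf]
    rw [← integral_const_mul]
    exact integral_congr_ae (Eventually.of_forall fun v => by ring)
  rw [hstep1]
  congr 1
  have hswap : ∫ z : ℝ × ℝ, (∫ v in Ioi (0:ℝ),
        Real.exp (-v ^ 2 / 2) *
          (Real.exp (-(p * z.1)) * Real.sin (v * z.1) * (Real.exp (-(q * z.2)) * Real.sin (v * z.2)))) ∂(μ.prod μ)
      = ∫ v in Ioi (0:ℝ), ∫ z : ℝ × ℝ,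
          Real.exp (-v ^ 2 / 2) *
            (Real.exp (-(p * z.1)) * Real.sin (v * z.1) * (Real.exp (-(q * z.2)) * Real.sin (v * z.2))) ∂(μ.prod μ) := by
    apply integral_integral_swap
    refine Integrable.mono' (g := fun w : (ℝ × ℝ) × ℝ =>
      (Real.exp (-(p * w.1.1)) * Real.exp (-(q * w.1.2))) * Real.exp (-w.2 ^ 2 / 2)) ?_
      (Continuous.aestronglyMeasurable (by fun_prop)) ?_
    · have hg : Integrable (fun v : ℝ => Real.exp (-v^2/2)) (volume.restrict (Ioi (0:ℝ))) := by
        have he : (fun v : ℝ => Real.exp (-v^2/2)) = fun v : ℝ => Real.exp (-(1/2) * v^2) := by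
          funext v; ring_nf
        rw [he]
        exact (integrable_exp_neg_mul_sq (by norm_num : (0:ℝ) < 1/2)).restrict
      exact Integrable.mul_prod (integrable_exp_prod p q hp hq) hg
    · filter_upwards with w
      simp only [Function.uncurry, Real.norm_eq_abs]
      exact aux_bound _ _ _ _ _ (Real.exp_pos _).le (Real.exp_pos _).le (Real.exp_pos _).le
        (abs_sin_le_one _) (abs_sin_le_one _)
  rw [hswap]
  refine setIntegral_congr_fun measurableSet_Ioi (fun v hv => ?_)
  rw [integral_const_mul]
  congr 1
  rw [integral_prod_mul (μ := μ) (ν := μ)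
    (f := fun x => Real.exp (-(p * x)) * Real.sin (v * x))
    (g := fun y => Real.exp (-(q * y)) * Real.sin (v * y)),
    laplace_sin p v hp, laplace_sin q v hq]


lemma scaled (α γ τ : ℝ) (hα : 0 < α) (hγ : 0 < γ) (hτ : 0 < τ) :
    (1 / (2 * π)) * ∫ v in Ioi (0:ℝ),
        Real.exp (-τ * v ^ 2 / 2) * (4 * v ^ 2) / ((α ^ 2 + v ^ 2) * (γ ^ 2 + v ^ 2))
      = Real.sqrt τ * cAC (α * Real.sqrt (2 * τ)) (γ * Real.sqrt (2 * τ)) := by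
  have hst : 0 < Real.sqrt τ := Real.sqrt_pos.mpr hτ
  set p := γ * Real.sqrt τ with hpdef
  set q := α * Real.sqrt τ with hqdef
  have hp : 0 < p := mul_pos hγ hst
  have hq : 0 < q := mul_pos hα hst
  have hexp : ∀ z : ℝ × ℝ,
      -((γ * Real.sqrt (2*τ)) * z.1 + (α * Real.sqrt (2*τ)) * z.2) / Real.sqrt 2
        = -(p * z.1 + q * z.2) := by
    intro z
    rw [Real.sqrt_mul (by norm_num : (0:ℝ) ≤ 2)]
    have h2 : Real.sqrt 2 ≠ 0 := by positivity
    field_simp [hpdef, hqdef]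
    ring
  have h1 : cAC (α * Real.sqrt (2*τ)) (γ * Real.sqrt (2*τ))
      = ∫ z : ℝ × ℝ in Ioi (0:ℝ) ×ˢ Ioi (0:ℝ), Real.exp (-(p*z.1 + q*z.2)) * gker 1 z.1 z.2 := by
    unfold cAC
    exact integral_congr_ae (Eventually.of_forall fun z => by simp only; rw [hexp z])
  rw [h1, fubini_main p q hp hq]
  have hsub := integral_comp_mul_left_Ioi
    (fun v => Real.exp (-v ^ 2 / 2) * (v / (p ^ 2 + v ^ 2) * (v / (q ^ 2 + v ^ 2)))) 0 hst
  simp only [mul_zero, smul_eq_mul] at hsub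
  have hJ : ∫ v in Ioi (0:ℝ), Real.exp (-v ^ 2 / 2) * (v / (p ^ 2 + v ^ 2) * (v / (q ^ 2 + v ^ 2)))
      = Real.sqrt τ * ∫ v in Ioi (0:ℝ), Real.exp (-(Real.sqrt τ * v) ^ 2 / 2) *
          ((Real.sqrt τ * v) / (p ^ 2 + (Real.sqrt τ * v) ^ 2) *
            ((Real.sqrt τ * v) / (q ^ 2 + (Real.sqrt τ * v) ^ 2))) := by
    rw [hsub]
    field_simp
  rw [hJ]
  have hts : Real.sqrt τ * Real.sqrt τ = τ := Real.mul_self_sqrt hτ.le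
  have hpt : ∀ v ∈ Ioi (0:ℝ), Real.exp (-(Real.sqrt τ * v) ^ 2 / 2) *
      ((Real.sqrt τ * v) / (p ^ 2 + (Real.sqrt τ * v) ^ 2) *
        ((Real.sqrt τ * v) / (q ^ 2 + (Real.sqrt τ * v) ^ 2)))
      = (1/(4*τ)) * (Real.exp (-τ * v ^ 2 / 2) * (4 * v ^ 2) / ((α ^ 2 + v ^ 2) * (γ ^ 2 + v ^ 2))) := by
    intro v hv
    set s := Real.sqrt τ with hsdef
    have h : s ^ 2 = τ := Real.sq_sqrt hτ.le
    rw [hpdef, hqdef, ← h,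
      show (-(s * v) ^ 2 / 2 : ℝ) = -s ^ 2 * v ^ 2 / 2 from by ring]
    have hαv : (0:ℝ) < α ^ 2 + v ^ 2 := by positivity
    have hγv : (0:ℝ) < γ ^ 2 + v ^ 2 := by positivity
    have hsne : s ≠ 0 := hst.ne'
    field_simp
  rw [setIntegral_congr_fun measurableSet_Ioi hpt, integral_const_mul]
  set K := ∫ v in Ioi (0:ℝ),
      Real.exp (-τ * v ^ 2 / 2) * (4 * v ^ 2) / ((α ^ 2 + v ^ 2) * (γ ^ 2 + v ^ 2)) with hK
  rw [show Real.sqrt τ * (2/π * (Real.sqrt τ * ((1/(4*τ)) * K)))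
      = (Real.sqrt τ * Real.sqrt τ) * (K * (2/π) * (1/(4*τ))) by ring, hts]
  field_simp
  ring

lemma integrable_shift_gauss (x : ℝ) :
    Integrable (fun y : ℝ => Real.exp (-(x - y) ^ 2 / 2)) := by
  have h : (fun y : ℝ => Real.exp (-(x - y) ^ 2 / 2))
      = fun y => Real.exp (-(1/2) * (y - x) ^ 2) := by
    funext y; ring_nf
  rw [h]
  exact (integrable_exp_neg_mul_sq (by norm_num : (0:ℝ) < 1/2)).comp_sub_right x

lemma integral_shift_gauss_le (x : ℝ) :
    ∫ y in Ioi (0:ℝ), Real.exp (-(x - y) ^ 2 / 2) ≤ Real.sqrt (2 * π) := by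
  have h1 : ∫ y in Ioi (0:ℝ), Real.exp (-(x - y) ^ 2 / 2)
      ≤ ∫ y : ℝ, Real.exp (-(x - y) ^ 2 / 2) :=
    setIntegral_le_integral (integrable_shift_gauss x)
      (ae_of_all _ fun y => (Real.exp_pos _).le)
  have h2 : ∫ y : ℝ, Real.exp (-(x - y) ^ 2 / 2) = Real.sqrt (2 * π) := by
    have h : (fun y : ℝ => Real.exp (-(x - y) ^ 2 / 2))
        = fun y => Real.exp (-(1/2) * (y + -x) ^ 2) := by
      funext y; ring_nf
    rw [h, integral_add_right_eq_self (fun y => Real.exp (-(1/2) * y ^ 2)) (-x),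
      integral_gaussian]
    rw [show (π/(1/2):ℝ) = 2*π by ring]
  linarith

lemma integrable_ker_row (r : ℝ) (hr : 0 < r) :
    Integrable (fun z : ℝ × ℝ => Real.exp (-(r * z.1)) * Real.exp (-(z.1 - z.2) ^ 2 / 2))
      ((volume.restrict (Ioi (0:ℝ))).prod (volume.restrict (Ioi (0:ℝ)))) := by
  have hmeas : AEStronglyMeasurable
      (fun z : ℝ × ℝ => Real.exp (-(r * z.1)) * Real.exp (-(z.1 - z.2) ^ 2 / 2))
      ((volume.restrict (Ioi (0:ℝ))).prod (volume.restrict (Ioi (0:ℝ)))) :=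
    Continuous.aestronglyMeasurable (by fun_prop)
  rw [integrable_prod_iff hmeas]
  constructor
  · filter_upwards with x
    exact ((integrable_shift_gauss x).restrict (s := Ioi 0)).const_mul _
  · refine Integrable.mono' (g := fun x => Real.exp (-(r*x)) * Real.sqrt (2*π))
      ((by simpa [neg_mul, IntegrableOn] using exp_neg_integrableOn_Ioi 0 hr : Integrable _ _).mul_const _)
      hmeas.norm.integral_prod_right' (ae_of_all _ fun x => ?_)
    have hnn : 0 ≤ ∫ y in Ioi (0:ℝ), ‖Real.exp (-(r*x)) * Real.exp (-(x - y) ^ 2 / 2)‖ :=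
      integral_nonneg fun y => norm_nonneg _
    rw [Real.norm_eq_abs, abs_of_nonneg hnn]
    have he : ∀ y : ℝ, ‖Real.exp (-(r*x)) * Real.exp (-(x - y) ^ 2 / 2)‖
        = Real.exp (-(r*x)) * Real.exp (-(x - y) ^ 2 / 2) := fun y => by
      rw [Real.norm_eq_abs, abs_of_pos (by positivity)]
    simp only [he]
    rw [integral_const_mul]
    exact mul_le_mul_of_nonneg_left (integral_shift_gauss_le x) (Real.exp_pos _).le

lemma integrable_ker_col (r : ℝ) (hr : 0 < r) :
    Integrable (fun z : ℝ × ℝ => Real.exp (-(r * z.2)) * Real.exp (-(z.1 - z.2) ^ 2 / 2))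
      ((volume.restrict (Ioi (0:ℝ))).prod (volume.restrict (Ioi (0:ℝ)))) := by
  have h := (integrable_ker_row r hr).swap
  refine (integrable_congr (ae_of_all _ fun z => ?_)).mp h
  show Real.exp (-(r * z.2)) * Real.exp (-(z.2 - z.1) ^ 2 / 2) = _
  rw [show (z.2 - z.1)^2 = (z.1 - z.2)^2 by ring]

lemma measurable_gker2 : Measurable (fun z : ℝ × ℝ => gker 1 z.1 z.2) := by
  have hset : MeasurableSet {z : ℝ × ℝ | 0 < z.1 ∧ 0 < z.2} := by
    have : {z : ℝ × ℝ | 0 < z.1 ∧ 0 < z.2} = Ioi (0:ℝ) ×ˢ Ioi (0:ℝ) := by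
      ext z; simp [Set.mem_prod]
    rw [this]
    exact measurableSet_Ioi.prod measurableSet_Ioi
  unfold gker
  exact Measurable.ite hset (by fun_prop) measurable_const

lemma gker_nonneg (x y : ℝ) : 0 ≤ gker 1 x y := by
  unfold gker
  split_ifs with h
  · obtain ⟨hx, hy⟩ := h
    have : (x - y)^2 ≤ (x + y)^2 := by nlinarith
    have hle : Real.exp (-(x+y)^2/(2*1)) ≤ Real.exp (-(x-y)^2/(2*1)) := by
      apply Real.exp_le_exp.mpr; nlinarith
    have : (0:ℝ) ≤ (Real.sqrt (2*π*1))⁻¹ := by positivity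
    nlinarith
  · exact le_refl 0

lemma gker_le (x y : ℝ) : gker 1 x y ≤ (Real.sqrt (2*π))⁻¹ * Real.exp (-(x - y) ^ 2 / 2) := by
  unfold gker
  split_ifs with h
  · rw [show (2*π*1 : ℝ) = 2*π by ring]
    have h2 : (0:ℝ) ≤ (Real.sqrt (2*π))⁻¹ := by positivity
    have h3 : 0 < Real.exp (-(x+y)^2/(2*1)) := Real.exp_pos _
    rw [show (-(x - y) ^ 2 / (2*1) : ℝ) = -(x - y) ^ 2 / 2 by ring]
    nlinarith [Real.exp_pos (-(x-y)^2/2)]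
  · positivity

lemma integrable_kernel (p q : ℝ) (hp : 0 ≤ p) (hq : 0 ≤ q) (hpq : 0 < p + q) :
    IntegrableOn (fun z : ℝ × ℝ => Real.exp (-(p * z.1 + q * z.2)) * gker 1 z.1 z.2)
      (Ioi (0:ℝ) ×ˢ Ioi (0:ℝ)) := by
  rw [IntegrableOn, Measure.volume_eq_prod, ← Measure.prod_restrict]
  have hmeas : AEStronglyMeasurable
      (fun z : ℝ × ℝ => Real.exp (-(p * z.1 + q * z.2)) * gker 1 z.1 z.2)
      ((volume.restrict (Ioi (0:ℝ))).prod (volume.restrict (Ioi (0:ℝ)))) := by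
    apply Measurable.aestronglyMeasurable
    exact (Measurable.mul (by fun_prop) measurable_gker2)
  have hpos : 0 < p ∨ 0 < q := by
    rcases lt_or_eq_of_le hp with h | h
    · exact Or.inl h
    · right; rw [← h] at hpq; simpa using hpq
  have hbound : ∀ r (z : ℝ × ℝ), z ∈ Ioi (0:ℝ) ×ˢ Ioi (0:ℝ) → (r = p * z.1 ∨ r = q * z.2) →
      ‖Real.exp (-(p * z.1 + q * z.2)) * gker 1 z.1 z.2‖
        ≤ (Real.sqrt (2*π))⁻¹ * (Real.exp (-r) * Real.exp (-(z.1 - z.2) ^ 2 / 2)) := by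
    intro r z hz hr
    obtain ⟨hz1, hz2⟩ := hz
    have h1 : 0 ≤ gker 1 z.1 z.2 := gker_nonneg _ _
    have h2 : Real.exp (-(p * z.1 + q * z.2)) ≤ Real.exp (-r) := by
      apply Real.exp_le_exp.mpr
      rcases hr with rfl | rfl
      · simp only [neg_le_neg_iff, le_add_iff_nonneg_right]
        exact mul_nonneg hq hz2.le
      · simp only [neg_le_neg_iff, le_add_iff_nonneg_left]
        exact mul_nonneg hp hz1.le
    rw [Real.norm_eq_abs, abs_of_nonneg (mul_nonneg (Real.exp_pos _).le h1)]
    calc Real.exp (-(p * z.1 + q * z.2)) * gker 1 z.1 z.2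
        ≤ Real.exp (-r) * ((Real.sqrt (2*π))⁻¹ * Real.exp (-(z.1 - z.2) ^ 2 / 2)) := by
          apply mul_le_mul h2 (gker_le _ _) h1 (Real.exp_pos _).le
      _ = (Real.sqrt (2*π))⁻¹ * (Real.exp (-r) * Real.exp (-(z.1 - z.2) ^ 2 / 2)) := by ring
  rcases hpos with hp' | hq'
  · refine Integrable.mono' (((integrable_ker_row p hp').const_mul ((Real.sqrt (2*π))⁻¹)))
      hmeas ?_
    rw [Measure.prod_restrict, ae_restrict_iff' (measurableSet_Ioi.prod measurableSet_Ioi)]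
    exact ae_of_all _ fun z hz => hbound (p * z.1) z hz (Or.inl rfl)
  · refine Integrable.mono' (((integrable_ker_col q hq').const_mul ((Real.sqrt (2*π))⁻¹)))
      hmeas ?_
    rw [Measure.prod_restrict, ae_restrict_iff' (measurableSet_Ioi.prod measurableSet_Ioi)]
    exact ae_of_all _ fun z hz => hbound (q * z.2) z hz (Or.inr rfl)

lemma exp_arg (α γ τ : ℝ) (z : ℝ × ℝ) :
    -(γ * Real.sqrt (2*τ) * z.1 + α * Real.sqrt (2*τ) * z.2) / Real.sqrt 2
      = -(γ * Real.sqrt τ * z.1 + α * Real.sqrt τ * z.2) := by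
  rw [Real.sqrt_mul (by norm_num : (0:ℝ) ≤ 2)]
  have h2 : Real.sqrt 2 ≠ 0 := by positivity
  field_simp


end Aux

/-- Gaussian integral identity relating the rational-kernel integral to the
normalizing constant `𝔠(|a|√(2τ), |c|√(2τ))`. -/
theorem statement13 (a c τ : ℝ) (hac : 0 < a + c) (hτ : 0 < τ) :
    (1 / (2 * Real.pi)) *
        ∫ v in Set.Ioi (0 : ℝ),
          Real.exp (-τ * v ^ 2 / 2) * (4 * v ^ 2) / ((a ^ 2 + v ^ 2) * (c ^ 2 + v ^ 2)) =
      Real.sqrt τ * cAC (|a| * Real.sqrt (2 * τ)) (|c| * Real.sqrt (2 * τ)) := by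
  have hst : 0 < Real.sqrt τ := Real.sqrt_pos.mpr hτ
  have hs2 : 0 < a ^ 2 + c ^ 2 := by nlinarith [sq_nonneg (a - c), mul_pos hac hac]
  have habs : 0 < |a| + |c| := lt_of_lt_of_le hac (add_le_add (le_abs_self a) (le_abs_self c))
  set F : ℝ → ℝ := fun ε => (1 / (2 * π)) * ∫ v in Ioi (0:ℝ),
      Real.exp (-τ * v ^ 2 / 2) * (4 * v ^ 2) / (((|a|+ε) ^ 2 + v ^ 2) * ((|c|+ε) ^ 2 + v ^ 2))
    with hFdef
  set G : ℝ → ℝ := fun ε => Real.sqrt τ * cAC ((|a|+ε) * Real.sqrt (2 * τ))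
      ((|c|+ε) * Real.sqrt (2 * τ)) with hGdef
  have hFG : ∀ ε ∈ Ioi (0:ℝ), F ε = G ε := fun ε hε =>
    scaled (|a|+ε) (|c|+ε) τ (add_pos_of_nonneg_of_pos (abs_nonneg a) hε)
      (add_pos_of_nonneg_of_pos (abs_nonneg c) hε) hτ
  -- limit of F
  have hboundF : Integrable (fun v : ℝ => Real.exp (-τ * v ^ 2 / 2) * (4 / (a^2 + c^2)))
      (volume.restrict (Ioi (0:ℝ))) := by
    have : (fun v : ℝ => Real.exp (-τ * v ^ 2 / 2) * (4 / (a^2 + c^2)))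
        = fun v : ℝ => Real.exp (-(τ/2) * v ^ 2) * (4 / (a^2 + c^2)) := by
      funext v; ring_nf
    rw [this]
    exact ((integrable_exp_neg_mul_sq (by positivity : (0:ℝ) < τ/2)).mul_const _).restrict
  have hmeasF : ∀ ε : ℝ, AEStronglyMeasurable (fun v : ℝ =>
      Real.exp (-τ * v ^ 2 / 2) * (4 * v ^ 2) / (((|a|+ε) ^ 2 + v ^ 2) * ((|c|+ε) ^ 2 + v ^ 2)))
      (volume.restrict (Ioi (0:ℝ))) := by
    intro ε
    exact (Measurable.div (by fun_prop) (by fun_prop)).aestronglyMeasurable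
  have hbnd : ∀ ε ∈ Ioi (0:ℝ), ∀ v ∈ Ioi (0:ℝ), ∀ b d : ℝ, a^2 ≤ b → c^2 ≤ d →
      ‖Real.exp (-τ * v ^ 2 / 2) * (4 * v ^ 2) / ((b + v ^ 2) * (d + v ^ 2))‖
        ≤ Real.exp (-τ * v ^ 2 / 2) * (4 / (a^2 + c^2)) := by
    intro ε hε v hv b d hb hd
    have hv0 : (0:ℝ) < v := hv
    have hb0 : (0:ℝ) ≤ b := le_trans (sq_nonneg a) hb
    have hd0 : (0:ℝ) ≤ d := le_trans (sq_nonneg c) hd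
    have hD : (0:ℝ) < (b + v ^ 2) * (d + v ^ 2) := by positivity
    rw [Real.norm_eq_abs, abs_of_nonneg (by positivity), div_le_iff₀ hD]
    have hkey : (a^2 + c^2) * v^2 ≤ (b + v ^ 2) * (d + v ^ 2) := by nlinarith
    have e4 : Real.exp (-τ * v ^ 2 / 2) * (4 / (a^2+c^2)) * ((a^2 + c^2) * v^2)
        = Real.exp (-τ * v ^ 2 / 2) * (4 * v ^ 2) := by
      field_simp
    calc Real.exp (-τ * v ^ 2 / 2) * (4 * v ^ 2)
        = Real.exp (-τ * v ^ 2 / 2) * (4 / (a^2+c^2)) * ((a^2 + c^2) * v^2) := e4.symm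
      _ ≤ Real.exp (-τ * v ^ 2 / 2) * (4 / (a^2+c^2)) * ((b + v ^ 2) * (d + v ^ 2)) := by
          apply mul_le_mul_of_nonneg_left hkey (by positivity)
  have hFlim : Tendsto F (𝓝[>] (0:ℝ)) (𝓝 ((1 / (2 * π)) *
      ∫ v in Ioi (0:ℝ),
        Real.exp (-τ * v ^ 2 / 2) * (4 * v ^ 2) / ((a ^ 2 + v ^ 2) * (c ^ 2 + v ^ 2)))) := by
    apply Tendsto.const_mul
    have := tendsto_integral_filter_of_dominated_convergence
      (μ := volume.restrict (Ioi (0:ℝ))) (l := 𝓝[>] (0:ℝ))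
      (F := fun ε v => Real.exp (-τ * v ^ 2 / 2) * (4 * v ^ 2) /
        (((|a|+ε) ^ 2 + v ^ 2) * ((|c|+ε) ^ 2 + v ^ 2)))
      (f := fun v => Real.exp (-τ * v ^ 2 / 2) * (4 * v ^ 2) /
        ((a ^ 2 + v ^ 2) * (c ^ 2 + v ^ 2)))
      (bound := fun v => Real.exp (-τ * v ^ 2 / 2) * (4 / (a^2 + c^2)))
      (Eventually.of_forall hmeasF) ?_ hboundF ?_
    · exact this
    · filter_upwards [eventually_mem_nhdsWithin] with ε hε
      rw [ae_restrict_iff' measurableSet_Ioi]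
      refine ae_of_all _ fun v hv => hbnd ε hε v hv _ _ ?_ ?_
      · rw [← sq_abs a]; nlinarith [abs_nonneg a, le_of_lt (show (0:ℝ) < ε from hε)]
      · rw [← sq_abs c]; nlinarith [abs_nonneg c, le_of_lt (show (0:ℝ) < ε from hε)]
    · rw [ae_restrict_iff' measurableSet_Ioi]
      refine ae_of_all _ fun v hv => ?_
      have hv0 : (0:ℝ) < v := hv
      have hvsq : (0:ℝ) < v ^ 2 := pow_pos hv0 2
      have h1 : (0:ℝ) < (|a|+(0:ℝ)) ^ 2 + v ^ 2 :=
        add_pos_of_nonneg_of_pos (sq_nonneg _) hvsq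
      have h2 : (0:ℝ) < (|c|+(0:ℝ)) ^ 2 + v ^ 2 :=
        add_pos_of_nonneg_of_pos (sq_nonneg _) hvsq
      have hcont : ContinuousAt (fun ε : ℝ => Real.exp (-τ * v ^ 2 / 2) * (4 * v ^ 2) /
          (((|a|+ε) ^ 2 + v ^ 2) * ((|c|+ε) ^ 2 + v ^ 2))) 0 := by
        apply ContinuousAt.div (by fun_prop) (by fun_prop)
        exact ne_of_gt (mul_pos h1 h2)
      have h0 : ((|a|+(0:ℝ)) ^ 2 + v ^ 2) = a ^ 2 + v ^ 2 := by rw [add_zero, sq_abs]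
      have h0' : ((|c|+(0:ℝ)) ^ 2 + v ^ 2) = c ^ 2 + v ^ 2 := by rw [add_zero, sq_abs]
      have := hcont.tendsto.mono_left (nhdsWithin_le_nhds (s := Ioi (0:ℝ)))
      rw [h0, h0'] at this
      exact this
  have hGlim : Tendsto G (𝓝[>] (0:ℝ))
      (𝓝 (Real.sqrt τ * cAC (|a| * Real.sqrt (2 * τ)) (|c| * Real.sqrt (2 * τ)))) := by
    apply Tendsto.const_mul
    have hmeasG : ∀ ε : ℝ, AEStronglyMeasurable (fun z : ℝ × ℝ =>
        Real.exp (-((|c|+ε) * Real.sqrt (2*τ) * z.1 + (|a|+ε) * Real.sqrt (2*τ) * z.2) /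
          Real.sqrt 2) * gker 1 z.1 z.2)
        (volume.restrict (Ioi (0:ℝ) ×ˢ Ioi (0:ℝ))) := fun ε =>
      (Measurable.mul (by fun_prop) measurable_gker2).aestronglyMeasurable
    have hbint : IntegrableOn (fun z : ℝ × ℝ =>
        Real.exp (-(|c| * Real.sqrt τ * z.1 + |a| * Real.sqrt τ * z.2)) * gker 1 z.1 z.2)
        (Ioi (0:ℝ) ×ˢ Ioi (0:ℝ)) :=
      integrable_kernel (|c| * Real.sqrt τ) (|a| * Real.sqrt τ)
        (by positivity) (by positivity)
        (by
          have : 0 < (|a| + |c|) * Real.sqrt τ := mul_pos habs hst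
          nlinarith)
    show Tendsto (fun ε : ℝ => cAC ((|a|+ε) * Real.sqrt (2 * τ)) ((|c|+ε) * Real.sqrt (2 * τ)))
      (𝓝[>] (0:ℝ)) (𝓝 (cAC (|a| * Real.sqrt (2 * τ)) (|c| * Real.sqrt (2 * τ))))
    unfold cAC
    refine tendsto_integral_filter_of_dominated_convergence
      (μ := volume.restrict (Ioi (0:ℝ) ×ˢ Ioi (0:ℝ))) (l := 𝓝[>] (0:ℝ))
      (bound := fun z : ℝ × ℝ =>
        Real.exp (-(|c| * Real.sqrt τ * z.1 + |a| * Real.sqrt τ * z.2)) * gker 1 z.1 z.2)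
      (Eventually.of_forall hmeasG) ?_ hbint ?_
    · filter_upwards [eventually_mem_nhdsWithin] with ε hε
      rw [ae_restrict_iff' (measurableSet_Ioi.prod measurableSet_Ioi)]
      refine ae_of_all _ fun z hz => ?_
      obtain ⟨hz1, hz2⟩ := hz
      have hg := gker_nonneg z.1 z.2
      have hε0 : (0:ℝ) < ε := hε
      have hmono : Real.exp (-((|c|+ε) * Real.sqrt (2*τ) * z.1 + (|a|+ε) * Real.sqrt (2*τ) * z.2) /
          Real.sqrt 2) ≤ Real.exp (-(|c| * Real.sqrt (2*τ) * z.1 + |a| * Real.sqrt (2*τ) * z.2) /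
          Real.sqrt 2) := by
        apply Real.exp_le_exp.mpr
        have hnum : |c| * Real.sqrt (2*τ) * z.1 + |a| * Real.sqrt (2*τ) * z.2
            ≤ (|c|+ε) * Real.sqrt (2*τ) * z.1 + (|a|+ε) * Real.sqrt (2*τ) * z.2 := by
          have h1 : (0:ℝ) ≤ ε * Real.sqrt (2*τ) * z.1 :=
            mul_nonneg (mul_nonneg hε0.le (Real.sqrt_nonneg _)) (le_of_lt hz1)
          have h2 : (0:ℝ) ≤ ε * Real.sqrt (2*τ) * z.2 :=
            mul_nonneg (mul_nonneg hε0.le (Real.sqrt_nonneg _)) (le_of_lt hz2)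
          nlinarith
        have hsq2 : (0:ℝ) < Real.sqrt 2 := by positivity
        rw [neg_div, neg_div, neg_le_neg_iff]
        gcongr
      rw [Real.norm_eq_abs, abs_of_nonneg (mul_nonneg (Real.exp_pos _).le hg)]
      calc Real.exp (-((|c|+ε) * Real.sqrt (2*τ) * z.1 + (|a|+ε) * Real.sqrt (2*τ) * z.2) /
            Real.sqrt 2) * gker 1 z.1 z.2
          ≤ Real.exp (-(|c| * Real.sqrt (2*τ) * z.1 + |a| * Real.sqrt (2*τ) * z.2) /
            Real.sqrt 2) * gker 1 z.1 z.2 := mul_le_mul_of_nonneg_right hmono hg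
        _ = Real.exp (-(|c| * Real.sqrt τ * z.1 + |a| * Real.sqrt τ * z.2)) * gker 1 z.1 z.2 := by
            rw [exp_arg |a| |c| τ z]
    · refine ae_of_all _ fun z => ?_
      have hcont : ContinuousAt (fun ε : ℝ =>
          Real.exp (-((|c|+ε) * Real.sqrt (2*τ) * z.1 + (|a|+ε) * Real.sqrt (2*τ) * z.2) /
            Real.sqrt 2) * gker 1 z.1 z.2) 0 := by fun_prop
      have := hcont.tendsto.mono_left (nhdsWithin_le_nhds (s := Ioi (0:ℝ)))
      simpa using this
  have hEq : F =ᶠ[𝓝[>] (0:ℝ)] G := eventually_mem_nhdsWithin.mono hFG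
  exact tendsto_nhds_unique ((tendsto_congr' hEq).mp hFlim) hGlim
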